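/- arXiv:1710.03186 — 2 statements merged into one kernel-verified Lean document; each statement's English description precedes it below -/
import Mathlib

section
/- Let g : Multiset ℝ → ℝ be an extended aggregation function, ι ∈ ℝ a strong neutral element of g, i.e. for every nonempty multiset A of reals, g({g(A), ι}) = g(A), and suppose g satisfies the recursive partition property: for every finite family A₁, …, A_k of nonempty multisets of reals, g(A₁ + ⋯ + A_k) = g({g(A₁), …, g(A_k)}). Let S₁, …, S_k be nonempty multisets of sensor values and N₁, …, N_k nonempty multisets of noise values with, for each i, a pairing of the elements of S_i with the elements of N_i (so |S_i| = |N_i|), and let M_i be the multiset of masked values {g({s, n}) : (s, n) a pair of the pairing of S_i with N_i}. Assume for each i the distributive (commutative/associative) masking property g(M_i) = g({g(S_i), g(N_i)}), and that the noise aggregates to the neutral element, g(N_i) = ι. Then the aggregate of the union of the masked multisets equals the aggregate of the union of the original sensor values: g(M₁ + ⋯ + M_k) = g(S₁ + ⋯ + S_k). -/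
/-- Paper's Theorem 1 (heterogeneous privacy settings), exact noise-cancellation case.
`g` is an extended aggregation function with strong neutral element `ι`.
Each subset `i` has a pairing `P i : Multiset (ℝ × ℝ)` of sensor values with noise
values; `S i`, `N i` are its projections and `M i` the masked values `g {s, n}`. -/
theorem aggregate_of_heterogeneous_masking
    (g : Multiset ℝ → ℝ) (ι : ℝ)
    (hneutral : ∀ A : Multiset ℝ, A ≠ 0 → g {g A, ι} = g A)
    (hrec : ∀ (n : ℕ) (A : Fin n → Multiset ℝ), (∀ i, A i ≠ 0) →
      g (∑ i, A i) = g (Multiset.map (fun i => g (A i)) Finset.univ.val))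
    (k : ℕ) (P : Fin k → Multiset (ℝ × ℝ))
    (S N M : Fin k → Multiset ℝ)
    (hS : ∀ i, S i = (P i).map Prod.fst)
    (hN : ∀ i, N i = (P i).map Prod.snd)
    (hM : ∀ i, M i = (P i).map (fun p => g {p.1, p.2}))
    (hSne : ∀ i, S i ≠ 0)
    (hdist : ∀ i, g (M i) = g {g (S i), g (N i)})
    (hnoise : ∀ i, g (N i) = ι) :
    g (∑ i, M i) = g (∑ i, S i) := by
  have hMne : ∀ i, M i ≠ 0 := by
    intro i h
    apply hSne i
    rw [hM, Multiset.map_eq_zero] at h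
    rw [hS, h, Multiset.map_zero]
  have hgM : ∀ i, g (M i) = g (S i) := fun i => by
    rw [hdist, hnoise, hneutral _ (hSne i)]
  rw [hrec k M hMne, hrec k S hSne]
  congr 1
  exact Multiset.map_congr rfl (fun i _ => hgM i)
end

section
/- Let m be a natural number, θ₀, …, θ_m real coefficients, and ν(u) = Σ_{ξ=0}^{m} (θ_ξ · sin(2πu))^(2ξ+1). Let μ be the uniform probability measure on the interval [0,1]. Then the distribution of the noise ν under μ is symmetric around zero: the pushforward of μ under u ↦ ν(u) equals the pushforward of μ under u ↦ −ν(u). -/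
open Real MeasureTheory

/-! The reflection `u ↦ 1 - u` preserves the uniform measure on `[0,1]` and sends `sin (2πu)` to
`-sin (2πu)`; since `ν` is an odd function of `sin (2πu)`, it satisfies `ν (1 - u) = -ν u`, so `ν`
and `-ν` have the same law. -/

theorem Real.measurePreserving_sub_left_restrict_Icc (a b : ℝ) :
    MeasurePreserving (fun u : ℝ => a + b - u)
      (volume.restrict (Set.Icc a b)) (volume.restrict (Set.Icc a b)) := by
  have h := (Measure.measurePreserving_sub_left volume (a + b)).restrict_preimage
    (measurableSet_Icc (a := a) (b := b))
  rwa [Set.preimage_const_sub_Icc, add_sub_cancel_right, add_sub_cancel_left] at h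

theorem MeasureTheory.Measure.map_eq_map_neg_of_measurePreserving {α β : Type*}
    [MeasurableSpace α] [MeasurableSpace β] [Neg β] {μ : Measure α} {g : α → α}
    (hg : MeasurePreserving g μ μ) {f : α → β} (hf : Measurable f)
    (hfg : ∀ x, f (g x) = -f x) :
    μ.map f = μ.map (fun x => -f x) := by
  rw [← hg.map_eq, Measure.map_map hf hg.measurable, hg.map_eq]
  exact congrArg (μ.map ·) (funext hfg)

def oddPowerSum (θ : ℕ → ℝ) (m : ℕ) (x : ℝ) : ℝ :=
  ∑ ξ ∈ Finset.range (m + 1), (θ ξ * x) ^ (2 * ξ + 1)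

theorem oddPowerSum_neg (θ : ℕ → ℝ) (m : ℕ) (x : ℝ) :
    oddPowerSum θ m (-x) = -oddPowerSum θ m x := by
  simp only [oddPowerSum, mul_neg, Odd.neg_pow (odd_two_mul_add_one _), Finset.sum_neg_distrib]

@[fun_prop]
theorem continuous_oddPowerSum (θ : ℕ → ℝ) (m : ℕ) : Continuous (oddPowerSum θ m) := by
  unfold oddPowerSum
  fun_prop

/-- The sine polyonym noise `ν(u) = Σ_{ξ=0}^{m} (θ_ξ · sin(2πu))^(2ξ+1)`, with `u`
uniform on `[0,1]`, is symmetrically distributed around zero: the law of `ν` equals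
the law of `−ν`. -/
theorem sine_polyonym_noise_symmetric (m : ℕ) (θ : ℕ → ℝ) :
    MeasureTheory.Measure.map
        (fun u : ℝ =>
          ∑ ξ ∈ Finset.range (m + 1), (θ ξ * Real.sin (2 * Real.pi * u)) ^ (2 * ξ + 1))
        (MeasureTheory.volume.restrict (Set.Icc (0:ℝ) 1))
      = MeasureTheory.Measure.map
          (fun u : ℝ =>
            -∑ ξ ∈ Finset.range (m + 1), (θ ξ * Real.sin (2 * Real.pi * u)) ^ (2 * ξ + 1))
          (MeasureTheory.volume.restrict (Set.Icc (0:ℝ) 1)) := by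
  have hreflect := Real.measurePreserving_sub_left_restrict_Icc 0 1
  rw [zero_add] at hreflect
  refine Measure.map_eq_map_neg_of_measurePreserving (f := fun u => oddPowerSum θ m
    (sin (2 * π * u))) hreflect (by fun_prop) fun u => ?_
  rw [mul_one_sub, sin_two_pi_sub, oddPowerSum_neg]
end
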